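/- arXiv:0704.3843 — 2 statements merged into one kernel-verified Lean document; each statement's English description precedes it below -/
import Mathlib

section
/- Let G be a finite multigraph that is (k,0)-sparse but not (k,0)-tight. Then G contains a unique maximal (k,0)-tight subgraph H (possibly empty), and any edge with at least one endpoint outside V(H) can be added to G while preserving (k,0)-sparsity. -/
/-! Tight vertex sets of a `(k,0)`-sparse graph are closed under union: by supermodularity of
the spanned edge count, `i(S ∪ T) ≥ i(S) + i(T) - i(S ∩ T) ≥ k|S| + k|T| - k|S ∩ T| = k|S ∪ T|`.
Hence the union `W` of all tight sets is the unique maximal tight set. A new edge with an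
endpoint outside `W` only raises the count of sets `S` containing both its endpoints; such an `S`
is not tight, so it spanned fewer than `k|S|` edges before. -/

open scoped Classical

noncomputable section

/- We model a finite multigraph as a vertex type `V`, an edge (index) type `E`,
and an endpoint map `ends : E → Sym2 V`; loops are edges whose endpoints form a
diagonal unordered pair.  A (sub)graph is given by a `Finset` of edge indices. -/

variable {V E : Type*}

/-- The edges of `F` all of whose endpoints lie in `S`. -/
def spanned (ends : E → Sym2 V) (F : Finset E) (S : Finset V) : Finset E :=
  F.filter (fun e => ∀ v ∈ ends e, v ∈ S)

/-- `(k,l)`-sparsity: every nonempty vertex subset `S` spans at most `k|S| - l` edges. -/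
def Sparse (ends : E → Sym2 V) (F : Finset E) (k l : ℕ) : Prop :=
  ∀ S : Finset V, S.Nonempty → (spanned ends F S).card + l ≤ k * S.card

/-- The edge set `P` is a map (spanning the whole vertex set): it admits an
orientation (choice of a tail vertex among the endpoints of each edge) with
out-degree exactly `1` at every vertex. -/
def IsMapOn (ends : E → Sym2 V) (P : Finset E) : Prop :=
  ∃ tail : E → V, (∀ e ∈ P, tail e ∈ ends e) ∧
    ∀ v : V, (P.filter (fun e => tail e = v)).card = 1

/-- The edge set `F` decomposes into `k` edge-disjoint maps. -/
def IsKMap (ends : E → Sym2 V) (F : Finset E) (k : ℕ) : Prop :=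
  ∃ col : E → Fin k, ∀ i : Fin k, IsMapOn ends (F.filter (fun e => col e = i))

/-- Underlying simple graph of the edge set `F` (loops and multiplicities dropped). -/
def underGraph (ends : E → Sym2 V) (F : Finset E) : SimpleGraph V :=
  SimpleGraph.fromRel (fun u w => ∃ e ∈ F, ends e = s(u, w))

/-- `P` is a spanning pseudoforest: within each connected component, the number
of edges is at most the number of vertices (i.e. at most one cycle per component). -/
def IsPseudoforest [Fintype V] (ends : E → Sym2 V) (P : Finset E) : Prop :=
  ∀ v : V,
    (P.filter (fun e => ∀ u ∈ ends e,
        (underGraph ends P).connectedComponentMk u =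
          (underGraph ends P).connectedComponentMk v)).card ≤
      (Finset.univ.filter (fun u : V =>
        (underGraph ends P).connectedComponentMk u =
          (underGraph ends P).connectedComponentMk v)).card

/-- `P` is a spanning tree: connected underlying graph with `n - 1` edges
(counted with multiplicity). -/
def IsSpanningTree [Fintype V] (ends : E → Sym2 V) (P : Finset E) : Prop :=
  (underGraph ends P).Connected ∧ P.card + 1 = Fintype.card V

/-- Edge type of `K_n^{k,2k}`: `2k` parallel edges between each pair of distinct
vertices and `k` loops at each vertex. -/
abbrev KEdge (V : Type*) (k : ℕ) := {p : Sym2 V × Fin (2 * k) // p.1.IsDiag → (p.2 : ℕ) < k}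

/-- Endpoints of an edge of `K_n^{k,2k}`. -/
def kends {V : Type*} {k : ℕ} : KEdge V k → Sym2 V := fun p => p.1.1

def IsTight (ends : E → Sym2 V) (F : Finset E) (k : ℕ) (S : Finset V) : Prop :=
  (spanned ends F S).card = k * S.card

lemma spanned_empty (ends : E → Sym2 V) (F : Finset E) :
    spanned ends F (∅ : Finset V) = ∅ :=
  Finset.filter_false_of_mem fun e _ h => Finset.notMem_empty _ (h _ (Sym2.out_fst_mem (ends e)))

lemma spanned_union_subset (ends : E → Sym2 V) (F : Finset E) (S T : Finset V) :
    spanned ends F S ∪ spanned ends F T ⊆ spanned ends F (S ∪ T) := by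
  intro e he
  simp only [spanned, Finset.mem_union, Finset.mem_filter] at he ⊢
  rcases he with ⟨heF, h⟩ | ⟨heF, h⟩ <;> exact ⟨heF, fun v hv => by simp [h v hv]⟩

lemma spanned_inter (ends : E → Sym2 V) (F : Finset E) (S T : Finset V) :
    spanned ends F (S ∩ T) = spanned ends F S ∩ spanned ends F T := by
  ext e
  simp only [spanned, Finset.mem_inter, Finset.mem_filter]
  grind

lemma Sparse.card_spanned_le {ends : E → Sym2 V} {F : Finset E} {k : ℕ}
    (hs : Sparse ends F k 0) (S : Finset V) : (spanned ends F S).card ≤ k * S.card := by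
  rcases S.eq_empty_or_nonempty with rfl | hS
  · simp [spanned_empty]
  · exact hs S hS

lemma isTight_empty (ends : E → Sym2 V) (F : Finset E) (k : ℕ) :
    IsTight ends F k (∅ : Finset V) := by
  simp [IsTight, spanned_empty]

lemma IsTight.union {ends : E → Sym2 V} {F : Finset E} {k : ℕ} (hs : Sparse ends F k 0)
    {S T : Finset V} (hS : IsTight ends F k S) (hT : IsTight ends F k T) :
    IsTight ends F k (S ∪ T) := by
  unfold IsTight at *
  have hunion := Finset.card_le_card (spanned_union_subset ends F S T)
  have hedges := Finset.card_union_add_card_inter (spanned ends F S) (spanned ends F T)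
  have hverts : k * (S ∪ T).card + k * (S ∩ T).card = k * S.card + k * T.card := by
    rw [← Nat.mul_add, ← Nat.mul_add, Finset.card_union_add_card_inter]
  have hinter := hs.card_spanned_le (S ∩ T)
  have hup := hs.card_spanned_le (S ∪ T)
  rw [spanned_inter] at hinter
  omega

def maxTight [Fintype V] (ends : E → Sym2 V) (F : Finset E) (k : ℕ) : Finset V :=
  ((Finset.univ : Finset (Finset V)).filter (IsTight ends F k)).sup id

lemma subset_maxTight [Fintype V] {ends : E → Sym2 V} {F : Finset E} {k : ℕ} {S : Finset V}
    (hS : IsTight ends F k S) : S ⊆ maxTight ends F k :=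
  Finset.le_sup (f := id) (Finset.mem_filter.mpr ⟨Finset.mem_univ S, hS⟩)

lemma isTight_maxTight [Fintype V] {ends : E → Sym2 V} {F : Finset E} {k : ℕ}
    (hs : Sparse ends F k 0) : IsTight ends F k (maxTight ends F k) :=
  Finset.sup_induction (isTight_empty ends F k) (fun _ hS _ hT => hS.union hs hT)
    fun _ hS => (Finset.mem_filter.mp hS).2

lemma card_spanned_addEdge (ends : E → Sym2 V) (F : Finset E) (a : Sym2 V) (S : Finset V) :
    (spanned (Sum.elim ends fun _ : Unit => a) (F.disjSum Finset.univ) S).card =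
      (spanned ends F S).card + if ∀ v ∈ a, v ∈ S then 1 else 0 := by
  have : spanned (Sum.elim ends fun _ : Unit => a) (F.disjSum Finset.univ) S =
      (spanned ends F S).disjSum (if ∀ v ∈ a, v ∈ S then Finset.univ else ∅) := by
    by_cases haS : ∀ v ∈ a, v ∈ S
    · rw [if_pos haS]
      ext (e | u)
      · simp [spanned]
      · simpa [spanned] using haS
    · rw [if_neg haS]
      ext (e | u) <;> simp [spanned, haS]
  rw [this, Finset.card_disjSum]
  split_ifs <;> rfl

lemma Sparse.addEdge {ends : E → Sym2 V} {F : Finset E} {k : ℕ} (hs : Sparse ends F k 0)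
    {a : Sym2 V} (ha : ∀ S : Finset V, (∀ v ∈ a, v ∈ S) → ¬ IsTight ends F k S) :
    Sparse (Sum.elim ends fun _ : Unit => a) (F.disjSum Finset.univ) k 0 := by
  intro S hS
  have hle := hs S hS
  rw [card_spanned_addEdge]
  split_ifs with haS
  · have := ha S haS
    unfold IsTight at this
    omega
  · simpa using hle

theorem stmt5_general [Fintype V] [Fintype E] (k : ℕ) (ends : E → Sym2 V)
    (hs : Sparse ends Finset.univ k 0) :
    ∃ W : Finset V,
      (spanned ends Finset.univ W).card = k * W.card ∧
      (∀ S : Finset V, (spanned ends Finset.univ S).card = k * S.card → S ⊆ W) ∧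
      ∀ a : Sym2 V, (∃ v ∈ a, v ∉ W) →
        Sparse (Sum.elim ends (fun _ : Unit => a))
          (Finset.univ : Finset (E ⊕ Unit)) k 0 := by
  refine ⟨maxTight ends Finset.univ k, isTight_maxTight hs, fun S hS => subset_maxTight hS, ?_⟩
  rintro a ⟨v, hva, hvW⟩
  rw [← Finset.univ_disjSum_univ]
  exact hs.addEdge fun S haS hS => hvW (subset_maxTight hS (haS v hva))

/-- A `(k,0)`-sparse but not tight graph has a unique maximal `(k,0)`-tight
(induced) subgraph, on vertex set `W` (possibly empty); and any edge with an
endpoint outside `W` can be added preserving `(k,0)`-sparsity. -/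
theorem stmt5 [Fintype V] [Fintype E] (k : ℕ) (ends : E → Sym2 V)
    (hs : Sparse ends Finset.univ k 0)
    (hnt : Fintype.card E ≠ k * Fintype.card V) :
    ∃ W : Finset V,
      (spanned ends Finset.univ W).card = k * W.card ∧
      (∀ S : Finset V, (spanned ends Finset.univ S).card = k * S.card → S ⊆ W) ∧
      ∀ a : Sym2 V, (∃ v ∈ a, v ∉ W) →
        Sparse (Sum.elim ends (fun _ : Unit => a))
          (Finset.univ : Finset (E ⊕ Unit)) k 0 :=
  stmt5_general k ends hs
end
end

section
/- For every finite multigraph G and positive integer k, the graph G decomposes into k edge-disjoint spanning pseudoforests (graphs with at most one cycle per connected component) if and only if every vertex subset V' spans at most k|V'| edges. -/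
open scoped Classical

noncomputable section

/- We model a finite multigraph as a vertex type `V`, an edge (index) type `E`,
and an endpoint map `ends : E → Sym2 V`; loops are edges whose endpoints form a
diagonal unordered pair.  A (sub)graph is given by a `Finset` of edge indices. -/

variable {V E : Type*}

/-! If every `S` spans at most `k|S|` edges, Hall's theorem assigns to each edge a pair
(endpoint, colour) injectively; within one colour the chosen endpoints are distinct, so each
component has at most as many edges as vertices.

Conversely, in a pseudoforest the edges spanned by `S` inside a component `C` number at most
`|C ∩ S|` (when there are any): fixing a root `r ∈ C ∩ S`, sending each vertex of `C \ S` to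
the first edge of a shortest path to `r` injects `C \ S` into the edges of `C` not spanned by
`S`, and `C` has at most `|C|` edges. Summing over components and colours gives `k|S|`. -/

open Finset

lemma SimpleGraph.Reachable.exists_adj_dist_lt {G : SimpleGraph V} {u v : V}
    (hr : G.Reachable u v) (hne : u ≠ v) : ∃ x, G.Adj u x ∧ G.dist x v < G.dist u v := by
  obtain ⟨p, hp⟩ := hr.exists_walk_length_eq_dist
  cases p with
  | nil => exact absurd rfl hne
  | cons hadj q =>
    have := G.dist_le q
    rw [SimpleGraph.Walk.length_cons] at hp
    exact ⟨_, hadj, by omega⟩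

lemma mem_spanned {ends : E → Sym2 V} {F : Finset E} {S : Finset V} {e : E} :
    e ∈ spanned ends F S ↔ e ∈ F ∧ ∀ v ∈ ends e, v ∈ S :=
  mem_filter

lemma spanned_subset (ends : E → Sym2 V) (F : Finset E) (S : Finset V) : spanned ends F S ⊆ F :=
  filter_subset _ _

section Components

variable {ends : E → Sym2 V} {P : Finset E}

lemma underGraph_adj_iff {u w : V} :
    (underGraph ends P).Adj u w ↔ u ≠ w ∧ ∃ e ∈ P, ends e = s(u, w) := by
  simp [underGraph, Sym2.eq_swap]

lemma connectedComponentMk_eq_of_mem_ends {e : E} (he : e ∈ P) {u w : V} (hu : u ∈ ends e)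
    (hw : w ∈ ends e) :
    (underGraph ends P).connectedComponentMk u = (underGraph ends P).connectedComponentMk w := by
  rw [SimpleGraph.ConnectedComponent.eq]
  by_cases huw : u = w
  · rw [huw]
  · have hends : ends e = s(u, w) := (Sym2.mem_and_mem_iff huw).1 ⟨hu, hw⟩
    exact (underGraph_adj_iff.2 ⟨huw, e, he, hends⟩).reachable

variable (ends P) in
def componentEdges [Fintype V] (c : (underGraph ends P).ConnectedComponent) : Finset E :=
  P.filter fun e => ∀ u ∈ ends e, (underGraph ends P).connectedComponentMk u = c

variable (ends P) in
def componentVerts [Fintype V] (c : (underGraph ends P).ConnectedComponent) : Finset V :=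
  univ.filter fun u => (underGraph ends P).connectedComponentMk u = c

lemma mem_componentEdges_iff [Fintype V] {c : (underGraph ends P).ConnectedComponent} {e : E}
    {u : V} (hu : u ∈ ends e) :
    e ∈ componentEdges ends P c ↔ e ∈ P ∧ (underGraph ends P).connectedComponentMk u = c :=
  ⟨fun h => ⟨(mem_filter.1 h).1, (mem_filter.1 h).2 u hu⟩, fun ⟨he, hc⟩ =>
    mem_filter.2 ⟨he, fun _ hw => (connectedComponentMk_eq_of_mem_ends he hw hu).trans hc⟩⟩

lemma isPseudoforest_iff [Fintype V] :
    IsPseudoforest ends P ↔ ∀ c, #(componentEdges ends P c) ≤ #(componentVerts ends P c) :=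
  ⟨fun h c => c.ind h, fun h _ => h _⟩

lemma isPseudoforest_of_injOn [Fintype V] (tail : E → V) (htail : ∀ e ∈ P, tail e ∈ ends e)
    (hinj : Set.InjOn tail P) : IsPseudoforest ends P :=
  isPseudoforest_iff.2 fun _ => card_le_card_of_injOn tail
    (fun e he => by
      have he := mem_filter.1 he
      simpa [componentVerts] using he.2 _ (htail e he.1))
    (hinj.mono (filter_subset _ _))

end Components

section SpannedBound

variable [Fintype V] {ends : E → Sym2 V} {P : Finset E}

lemma card_componentVerts_sdiff_le {c : (underGraph ends P).ConnectedComponent} {S : Finset V}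
    {r : V} (hr : (underGraph ends P).connectedComponentMk r = c) (hrS : r ∈ S) :
    #(componentVerts ends P c \ S) ≤
      #(componentEdges ends P c \ spanned ends (componentEdges ends P c) S) := by
  set G := underGraph ends P
  refine card_le_card_of_forall_subsingleton
    (fun u e => ∃ x, ends e = s(u, x) ∧ G.dist x r < G.dist u r) (fun u hu => ?_) ?_
  · simp only [componentVerts, mem_sdiff, mem_filter, mem_univ, true_and] at hu
    obtain ⟨hcu, huS⟩ := hu
    have hne : u ≠ r := by rintro rfl; exact huS hrS
    obtain ⟨x, hadj, hdist⟩ :=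
      (SimpleGraph.ConnectedComponent.exact (hcu.trans hr.symm)).exists_adj_dist_lt hne
    obtain ⟨-, e, heP, he⟩ := underGraph_adj_iff.1 hadj
    have hue : u ∈ ends e := he ▸ Sym2.mem_mk_left u x
    have heE := (mem_componentEdges_iff hue).2 ⟨heP, hcu⟩
    exact ⟨e, mem_sdiff.2 ⟨heE, fun h => huS ((mem_spanned.1 h).2 u hue)⟩, x, he, hdist⟩
  · rintro e - u₁ ⟨-, x₁, h₁, d₁⟩ u₂ ⟨-, x₂, h₂, d₂⟩
    rw [h₁, Sym2.eq_iff] at h₂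
    rcases h₂ with ⟨h, -⟩ | ⟨rfl, rfl⟩
    · exact h
    · omega

lemma card_spanned_componentEdges_le {c : (underGraph ends P).ConnectedComponent}
    (hc : #(componentEdges ends P c) ≤ #(componentVerts ends P c)) (S : Finset V) :
    #(spanned ends (componentEdges ends P c) S) ≤
      #(S.filter fun v => (underGraph ends P).connectedComponentMk v = c) := by
  obtain hempty | ⟨e, he⟩ := (spanned ends (componentEdges ends P c) S).eq_empty_or_nonempty
  · simp [hempty]
  have hr := Sym2.out_fst_mem (ends e)
  obtain ⟨heP, heS⟩ := mem_spanned.1 he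
  have key := card_componentVerts_sdiff_le
    ((mem_componentEdges_iff hr).1 heP).2 (heS _ hr)
  have hE := card_sdiff_add_card_eq_card (spanned_subset ends (componentEdges ends P c) S)
  have hV := card_sdiff_add_card_inter (componentVerts ends P c) S
  have hVS : componentVerts ends P c ∩ S =
      S.filter fun v => (underGraph ends P).connectedComponentMk v = c := by
    ext v; simp [componentVerts, and_comm]
  rw [hVS] at hV
  omega

lemma card_spanned_le_of_isPseudoforest (hP : IsPseudoforest ends P) (S : Finset V) :
    #(spanned ends P S) ≤ #S := by
  set G := underGraph ends P
  let comp : E → G.ConnectedComponent := fun e => G.connectedComponentMk (ends e).out.1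
  calc #(spanned ends P S) = ∑ c, #((spanned ends P S).filter fun e => comp e = c) :=
        card_eq_sum_card_fiberwise fun _ _ => mem_univ _
    _ = ∑ c, #(spanned ends (componentEdges ends P c) S) := by
        refine sum_congr rfl fun c _ => congrArg card (ext fun e => ?_)
        simp only [mem_spanned, mem_filter, comp,
          mem_componentEdges_iff (Sym2.out_fst_mem (ends e))]
        tauto
    _ ≤ ∑ c, #(S.filter fun v => G.connectedComponentMk v = c) :=
        sum_le_sum fun c _ => card_spanned_componentEdges_le (isPseudoforest_iff.1 hP c) S
    _ = #S := (card_eq_sum_card_fiberwise fun _ _ => mem_univ _).symm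

end SpannedBound

lemma exists_injective_endpoint_color [Fintype V] [Fintype E] {k : ℕ} {ends : E → Sym2 V}
    (h : ∀ S : Finset V, #(spanned ends univ S) ≤ k * #S) :
    ∃ f : E → V × Fin k, Function.Injective f ∧ ∀ e, (f e).1 ∈ ends e := by
  let slots : E → Finset (V × Fin k) := fun e => univ.filter (· ∈ ends e) ×ˢ univ
  have hall : ∀ A : Finset E, #A ≤ #(A.biUnion slots) := by
    intro A
    let T : Finset V := univ.filter fun v => ∃ e ∈ A, v ∈ ends e
    have hslots : A.biUnion slots = T ×ˢ univ := by
      ext; simp [slots, T]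
    calc #A ≤ #(spanned ends univ T) := card_le_card fun e he =>
          mem_spanned.2 ⟨mem_univ _, fun v hv => mem_filter.2 ⟨mem_univ _, e, he, hv⟩⟩
      _ ≤ k * #T := h T
      _ = #(A.biUnion slots) := by rw [hslots, card_product, card_univ, Fintype.card_fin, mul_comm]
  obtain ⟨f, hf, hslot⟩ := (all_card_le_biUnion_card_iff_exists_injective slots).1 hall
  exact ⟨f, hf, fun e => by simpa [slots] using hslot e⟩

theorem stmt12_general [Fintype V] [Fintype E] (k : ℕ) (ends : E → Sym2 V) :
    (∃ col : E → Fin k, ∀ i : Fin k,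
        IsPseudoforest ends (Finset.univ.filter (fun e => col e = i))) ↔
      ∀ S : Finset V, (spanned ends Finset.univ S).card ≤ k * S.card := by
  constructor
  · rintro ⟨col, hcol⟩ S
    calc #(spanned ends univ S)
        = ∑ i, #(spanned ends (univ.filter fun e => col e = i) S) := by
          rw [card_eq_sum_card_fiberwise fun _ _ => mem_univ (col _)]
          exact sum_congr rfl fun i _ => by rw [spanned, spanned, filter_comm]
      _ ≤ ∑ _i : Fin k, #S := sum_le_sum fun i _ => card_spanned_le_of_isPseudoforest (hcol i) S
      _ = k * #S := by simp
  · intro h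
    obtain ⟨f, hf, hends⟩ := exists_injective_endpoint_color h
    refine ⟨fun e => (f e).2, fun i => isPseudoforest_of_injOn (fun e => (f e).1)
      (fun e _ => hends e) fun e₁ h₁ e₂ h₂ h12 => hf (Prod.ext h12 ?_)⟩
    exact (mem_filter.1 h₁).2.trans (mem_filter.1 h₂).2.symm

/-- `G` decomposes into `k` edge-disjoint spanning pseudoforests iff every vertex
subset `S` spans at most `k|S|` edges. -/
theorem stmt12 [Fintype V] [Fintype E] (k : ℕ) (hk : 0 < k) (ends : E → Sym2 V) :
    (∃ col : E → Fin k, ∀ i : Fin k,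
        IsPseudoforest ends (Finset.univ.filter (fun e => col e = i))) ↔
      ∀ S : Finset V, (spanned ends Finset.univ S).card ≤ k * S.card :=
  stmt12_general k ends
end
end
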